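/- For every integer x ≥ 1 with P(M_τ = x) > 0 and every integer j ≥ 1, one has the exact identity P(τ − θ_τ = j | M_τ = x) = P(τ_x = j, τ₊ > j) / P(τ₊ > τ_x), where τ_x = inf{n ≥ 1 : x + S_n ≤ 0} and τ₊ = min{n ≥ 1 : S_n > 0} are first passage times of a fresh copy of the walk. -/

import Mathlib

open MeasureTheory ProbabilityTheory Filter Real

variable {Ω : Type*}

/-- Partial sums of the increments: `Swalk X n = X 0 + ⋯ + X (n-1)` (the increments are
indexed from `0`, so `X 0` plays the role of `X₁`), with `Swalk X 0 = 0`. -/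
def Swalk (X : ℕ → Ω → ℤ) (n : ℕ) (ω : Ω) : ℤ := ∑ i ∈ Finset.range n, X i ω

/-- `τ = inf {n ≥ 1 : S n ≤ 0}` (junk value `0` when the walk never becomes nonpositive). -/
noncomputable def tauN (X : ℕ → Ω → ℤ) (ω : Ω) : ℕ :=
  sInf {n : ℕ | 1 ≤ n ∧ Swalk X n ω ≤ 0}

/-- `M_τ = max_{k ≤ τ} S k`. -/
noncomputable def Mtau (X : ℕ → Ω → ℤ) (ω : Ω) : ℤ :=
  (Finset.range (tauN X ω + 1)).sup'
    (Finset.nonempty_range_iff.mpr (Nat.succ_ne_zero _)) (fun k => Swalk X k ω)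

/-- `θ_τ = min {n ≥ 0 : S n = M_τ}`. -/
noncomputable def thetaTau (X : ℕ → Ω → ℤ) (ω : Ω) : ℕ :=
  sInf {n : ℕ | Swalk X n ω = Mtau X ω}

/-- `M n = max_{k ≤ n} S k`. -/
noncomputable def Mwalk (X : ℕ → Ω → ℤ) (n : ℕ) (ω : Ω) : ℤ :=
  (Finset.range (n + 1)).sup'
    (Finset.nonempty_range_iff.mpr (Nat.succ_ne_zero _)) (fun k => Swalk X k ω)

/-- Probability of an event, as a real number. -/
noncomputable def pr [MeasurableSpace Ω] (P : Measure Ω) (E : Set Ω) : ℝ := (P E).toReal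

/-- Standard normal distribution function `Φ`. -/
noncomputable def stdPhi (x : ℝ) : ℝ :=
  (Real.sqrt (2 * π))⁻¹ * ∫ t in Set.Iic x, Real.exp (-t ^ 2 / 2)

/-!
On `{M_τ = x}` with `x ≥ 1` the path splits at `n = θ_τ`. Before `n` the walk stays positive and
reaches `x` for the first time at `n`, an event `B_n` determined by the first `n` increments;
after `n` the walk of the remaining increments stays in `(-x, 0]` and drops to `≤ -x` at time
`τ - θ_τ`. Conversely, any such split determines `τ`, `θ_τ` and `M_τ`. Since the past and the
future of an i.i.d. sequence at a fixed time `n` are independent, and the future is again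
distributed like the whole sequence,
`P(τ - θ_τ = j, M_τ = x) = c · P(τ_x = j, τ₊ > j)` and `P(M_τ = x) = c · P(τ₊ > τ_x)`
with the same `c = ∑ₙ P(B_n)`, which cancels in the quotient.
-/

open Function

namespace RandomWalk

section Independence

variable {β : Type*}

def shiftSeq (X : ℕ → Ω → β) (n : ℕ) (ω : Ω) : ℕ → β := fun k => X (n + k) ω

lemma shiftSeq_zero (X : ℕ → Ω → β) : shiftSeq X 0 = fun ω k => X k ω := by
  funext ω k
  simp only [shiftSeq, zero_add]

variable {mΩ : MeasurableSpace Ω} [mβ : MeasurableSpace β] {P : Measure Ω} {X : ℕ → Ω → β}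

lemma measurable_shiftSeq (hm : ∀ i, Measurable (X i)) (n : ℕ) : Measurable (shiftSeq X n) :=
  measurable_pi_iff.2 fun k => hm (n + k)

lemma map_shiftSeq [IsProbabilityMeasure P] (hm : ∀ i, Measurable (X i)) (hX : iIndepFun X P)
    (hident : ∀ i, IdentDistrib (X i) (X 0) P P) (n : ℕ) :
    P.map (shiftSeq X n) = Measure.infinitePi fun _ => P.map (X 0) := by
  unfold shiftSeq
  rw [(hX.precomp (add_right_injective n)).map_fun_eq_infinitePi_map fun k => hm _]
  simp_rw [(hident _).map_eq]

lemma indep_iSup_lt_iSup_ge (hm : ∀ i, Measurable (X i)) (hX : iIndepFun X P) (n : ℕ) :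
    Indep (⨆ i < n, mβ.comap (X i)) (⨆ i ≥ n, mβ.comap (X i)) P :=
  indep_iSup_of_disjoint (fun i => (hm i).comap_le) hX.iIndep
    (S := Set.Iio n) (T := Set.Ici n) (Set.Iio_disjoint_Ici le_rfl)

lemma measure_inter_shiftSeq_preimage [IsProbabilityMeasure P] (hm : ∀ i, Measurable (X i))
    (hX : iIndepFun X P) (hident : ∀ i, IdentDistrib (X i) (X 0) P P) {n : ℕ} {B : Set Ω}
    (hB : MeasurableSet[⨆ i < n, mβ.comap (X i)] B) {D : Set (ℕ → β)} (hD : MeasurableSet D) :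
    P (B ∩ shiftSeq X n ⁻¹' D) = P B * P (shiftSeq X 0 ⁻¹' D) := by
  have hfuture : Measurable[⨆ i ≥ n, mβ.comap (X i)] (shiftSeq X n) :=
    @measurable_pi_lambda Ω ℕ (fun _ => β) (⨆ i ≥ n, mβ.comap (X i)) _ _ fun k =>
      (comap_measurable (X (n + k))).mono
        (le_iSup₂ (f := fun i (_ : i ≥ n) => mβ.comap (X i)) (n + k) (Nat.le_add_right n k)) le_rfl
  rw [(Indep_iff _ _ _).1 (indep_iSup_lt_iSup_ge hm hX n) _ _ hB (hfuture hD),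
    ← Measure.map_apply (measurable_shiftSeq hm n) hD,
    ← Measure.map_apply (measurable_shiftSeq hm 0) hD,
    map_shiftSeq hm hX hident, map_shiftSeq hm hX hident]

lemma measure_iUnion_inter_shiftSeq_preimage [IsProbabilityMeasure P]
    (hm : ∀ i, Measurable (X i)) (hX : iIndepFun X P)
    (hident : ∀ i, IdentDistrib (X i) (X 0) P P) {B : ℕ → Set Ω}
    (hB : ∀ n, MeasurableSet[⨆ i < n, mβ.comap (X i)] (B n)) (hdisj : Pairwise (Disjoint on B))
    {D : Set (ℕ → β)} (hD : MeasurableSet D) :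
    P (⋃ n, B n ∩ shiftSeq X n ⁻¹' D) = (∑' n, P (B n)) * P (shiftSeq X 0 ⁻¹' D) := by
  have hpast : ∀ n, ⨆ i < n, mβ.comap (X i) ≤ mΩ := fun n => iSup₂_le fun i _ => (hm i).comap_le
  rw [measure_iUnion (hdisj.mono fun _ _ h => h.mono Set.inter_subset_left Set.inter_subset_left)
      fun n => (hpast n _ (hB n)).inter (measurable_shiftSeq hm n hD),
    ← ENNReal.tsum_mul_right]
  exact tsum_congr fun n => measure_inter_shiftSeq_preimage hm hX hident (hB n) hD

end Independence

section Path

/-- `τ_x = j < τ₊` for the walk with increments `y`. -/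
def DescendsAt (x j : ℕ) (y : ℕ → ℤ) : Prop :=
  (∀ i, 1 ≤ i → i ≤ j → ∑ k ∈ Finset.range i, y k ≤ 0) ∧
    (∀ i, 1 ≤ i → i < j → -(x : ℤ) < ∑ k ∈ Finset.range i, y k) ∧
    ∑ k ∈ Finset.range j, y k ≤ -(x : ℤ)

/-- The event `B_n`: on `{M_τ = x}` it is the event `θ_τ = n`. -/
def ClimbsTo (X : ℕ → Ω → ℤ) (x n : ℕ) (ω : Ω) : Prop :=
  (∀ k, 1 ≤ k → k ≤ n → 0 < Swalk X k ω) ∧ (∀ k < n, Swalk X k ω < x) ∧ Swalk X n ω = x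

lemma measurable_descendsAt (x j : ℕ) : Measurable (DescendsAt x j) := by
  unfold DescendsAt
  fun_prop

lemma DescendsAt.one_le {x j : ℕ} {y : ℕ → ℤ} (hx : 1 ≤ x) (h : DescendsAt x j y) : 1 ≤ j := by
  by_contra hj
  have := Nat.lt_one_iff.1 (not_le.1 hj) ▸ h.2.2
  simp only [Finset.range_zero, Finset.sum_empty, Left.nonneg_neg_iff, Nat.cast_nonpos] at this
  omega

variable {X : ℕ → Ω → ℤ} {ω : Ω}

lemma Swalk_zero : Swalk X 0 ω = 0 := Finset.sum_range_zero _

lemma Swalk_add (n i : ℕ) :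
    Swalk X (n + i) ω = Swalk X n ω + ∑ k ∈ Finset.range i, shiftSeq X n ω k :=
  Finset.sum_range_add _ n i

lemma Swalk_le_Mtau {k : ℕ} (hk : k ≤ tauN X ω) : Swalk X k ω ≤ Mtau X ω :=
  Finset.le_sup' (fun k => Swalk X k ω) (Finset.mem_range_succ_iff.2 hk)

lemma exists_Swalk_eq_Mtau : ∃ k ≤ tauN X ω, Swalk X k ω = Mtau X ω := by
  obtain ⟨k, hk, h⟩ := Finset.exists_mem_eq_sup' (Finset.nonempty_range_iff.mpr
    (Nat.succ_ne_zero (tauN X ω))) fun k => Swalk X k ω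
  exact ⟨k, Finset.mem_range_succ_iff.1 hk, h.symm⟩

lemma Mtau_eq_of_le {n : ℕ} {c : ℤ} (hle : ∀ k ≤ tauN X ω, Swalk X k ω ≤ c)
    (hn : n ≤ tauN X ω) (hc : Swalk X n ω = c) : Mtau X ω = c :=
  le_antisymm (Finset.sup'_le _ _ fun k hk => hle k (Finset.mem_range_succ_iff.1 hk))
    (hc ▸ Swalk_le_Mtau hn)

/-- A walk that never becomes nonpositive has the junk value `tauN = 0`, hence `Mtau = 0`. -/
lemma exists_nonpos_of_Mtau_ne_zero (h : Mtau X ω ≠ 0) : ∃ n, 1 ≤ n ∧ Swalk X n ω ≤ 0 := by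
  by_contra hne
  have htau : tauN X ω = 0 :=
    Nat.sInf_eq_zero.2 (Or.inr (Set.eq_empty_iff_forall_notMem.2 fun n hn => hne ⟨n, hn⟩))
  refine h (Mtau_eq_of_le (fun k hk => ?_) (Nat.zero_le _) Swalk_zero)
  rw [htau, Nat.le_zero] at hk
  rw [hk, Swalk_zero]

lemma climbsTo_descendsAt_of_Mtau_eq {x : ℕ} (hx : 1 ≤ x) (hM : Mtau X ω = x) :
    ClimbsTo X x (thetaTau X ω) ω ∧
      DescendsAt x (tauN X ω - thetaTau X ω) (shiftSeq X (thetaTau X ω) ω) := by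
  set τ := tauN X ω
  set θ := thetaTau X ω
  obtain ⟨t₀, ht₀⟩ := exists_nonpos_of_Mtau_ne_zero (X := X) (ω := ω) (by omega)
  have hτ : 1 ≤ τ ∧ Swalk X τ ω ≤ 0 :=
    Nat.sInf_mem (s := {n | 1 ≤ n ∧ Swalk X n ω ≤ 0}) ⟨t₀, ht₀⟩
  have hpos : ∀ m, 1 ≤ m → m < τ → 0 < Swalk X m ω := fun m h1 hm => by
    have := Nat.notMem_of_lt_sInf hm
    simp only [Set.mem_ofPred_eq, not_and, not_le] at this
    exact this h1
  have hle : ∀ k ≤ τ, Swalk X k ω ≤ x := fun k hk => hM ▸ Swalk_le_Mtau hk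
  obtain ⟨k₀, hk₀, hk₀M⟩ := exists_Swalk_eq_Mtau (X := X) (ω := ω)
  have hθ : Swalk X θ ω = x := hM ▸ Nat.sInf_mem (s := {n | Swalk X n ω = Mtau X ω}) ⟨k₀, hk₀M⟩
  have hθmin : ∀ k < θ, Swalk X k ω ≠ x := fun k hk => hM ▸ Nat.notMem_of_lt_sInf hk
  have hθτ : θ < τ := by
    have : θ ≤ k₀ := Nat.sInf_le (s := {n | Swalk X n ω = Mtau X ω}) hk₀M
    refine lt_of_le_of_ne (by omega) fun h => ?_
    rw [h] at hθ
    omega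
  have hsum : ∀ i, ∑ k ∈ Finset.range i, shiftSeq X θ ω k = Swalk X (θ + i) ω - x := fun i => by
    rw [Swalk_add, hθ]; ring
  refine ⟨⟨fun k h1 hk => hpos k h1 (by omega),
    fun k hk => lt_of_le_of_ne (hle k (by omega)) (hθmin k hk), hθ⟩, ?_, ?_, ?_⟩
  · intro i _ hi
    linarith [hsum i, hle (θ + i) (by omega)]
  · intro i h1 hi
    linarith [hsum i, hpos (θ + i) (by omega) (by omega)]
  · linarith [hsum (τ - θ), Nat.add_sub_cancel' hθτ.le ▸ hτ.2]

lemma tauN_Mtau_thetaTau_of_climbsTo_descendsAt {x n j : ℕ} (hx : 1 ≤ x)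
    (hc : ClimbsTo X x n ω) (hd : DescendsAt x j (shiftSeq X n ω)) :
    tauN X ω = n + j ∧ Mtau X ω = x ∧ thetaTau X ω = n := by
  obtain ⟨hpos, hlt, hn⟩ := hc
  obtain ⟨hle, hgt, hend⟩ := hd
  have hj := DescendsAt.one_le hx ⟨hle, hgt, hend⟩
  have hS : ∀ i, Swalk X (n + i) ω = x + ∑ k ∈ Finset.range i, shiftSeq X n ω k := fun i => by
    rw [Swalk_add, hn]
  have hτ : tauN X ω = n + j := by
    refine IsLeast.csInf_eq ⟨⟨by omega, by rw [hS]; linarith⟩, fun m ⟨h1, hm⟩ => ?_⟩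
    by_contra hlt'
    rcases le_or_gt m n with hmn | hmn
    · linarith [hpos m h1 hmn]
    · obtain ⟨i, rfl⟩ : ∃ i, m = n + i := ⟨m - n, by omega⟩
      linarith [hS i, hgt i (by omega) (by omega)]
  have hM : Mtau X ω = x := by
    refine Mtau_eq_of_le (fun k hk => ?_) (by omega) hn
    rcases lt_trichotomy k n with hkn | rfl | hkn
    · exact (hlt k hkn).le
    · exact hn.le
    · obtain ⟨i, rfl⟩ : ∃ i, k = n + i := ⟨k - n, by omega⟩
      linarith [hS i, hle i (by omega) (by omega)]
  refine ⟨hτ, hM, IsLeast.csInf_eq ⟨hM ▸ hn, fun m hm => ?_⟩⟩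
  by_contra hmn
  exact (hlt m (not_le.1 hmn)).ne (hm.trans hM)

lemma sub_eq_and_Mtau_eq_iff {x j : ℕ} (hx : 1 ≤ x) :
    tauN X ω - thetaTau X ω = j ∧ Mtau X ω = x ↔
      ∃ n, ClimbsTo X x n ω ∧ DescendsAt x j (shiftSeq X n ω) := by
  constructor
  · rintro ⟨rfl, hM⟩
    exact ⟨thetaTau X ω, climbsTo_descendsAt_of_Mtau_eq hx hM⟩
  · rintro ⟨n, hc, hd⟩
    obtain ⟨hτ, hM, hθ⟩ := tauN_Mtau_thetaTau_of_climbsTo_descendsAt hx hc hd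
    exact ⟨by omega, hM⟩

lemma pairwise_disjoint_climbsTo (X : ℕ → Ω → ℤ) (x : ℕ) :
    Pairwise (Disjoint on fun n => {ω | ClimbsTo X x n ω}) := by
  intro n n' hne
  refine Set.disjoint_left.2 fun ω ⟨_, hlt, hn⟩ ⟨_, hlt', hn'⟩ => ?_
  rcases hne.lt_or_gt with h | h
  · exact (hlt' n h).ne hn
  · exact (hlt n' h).ne hn'

lemma measurableSet_climbsTo (X : ℕ → Ω → ℤ) (x n : ℕ) :
    MeasurableSet[⨆ i < n, MeasurableSpace.comap (X i) inferInstance] {ω | ClimbsTo X x n ω} := by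
  let _ : MeasurableSpace Ω := ⨆ i < n, MeasurableSpace.comap (X i) inferInstance
  have hS : ∀ k ≤ n, Measurable (Swalk X k) :=
    fun k hk => Finset.measurable_sum _ fun i hi => (comap_measurable (X i)).mono
      (le_iSup₂ (f := fun i (_ : i < n) => MeasurableSpace.comap (X i) inferInstance) i
        (by rw [Finset.mem_range] at hi; omega)) le_rfl
  rw [measurableSet_setOfPred]
  refine (Measurable.forall fun k => ?_).and ((Measurable.forall fun k => ?_).and ?_)
  · by_cases hk : k ≤ n
    · have := hS k hk
      fun_prop
    · simp only [hk, false_imp_iff, imp_true_iff, measurable_const]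
  · by_cases hk : k < n
    · have := hS k hk.le
      fun_prop
    · simp only [hk, false_imp_iff, measurable_const]
  · have := hS n le_rfl
    fun_prop

lemma setOf_sub_eq_and_Mtau_eq {x j : ℕ} (hx : 1 ≤ x) :
    {ω | tauN X ω - thetaTau X ω = j ∧ Mtau X ω = x} =
      ⋃ n, {ω | ClimbsTo X x n ω} ∩ shiftSeq X n ⁻¹' {y | DescendsAt x j y} := by
  ext ω
  simp only [Set.mem_iUnion, Set.mem_inter_iff, Set.mem_preimage, Set.mem_ofPred_eq]
  exact sub_eq_and_Mtau_eq_iff hx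

lemma setOf_Mtau_eq {x : ℕ} (hx : 1 ≤ x) :
    {ω | Mtau X ω = x} =
      ⋃ n, {ω | ClimbsTo X x n ω} ∩ shiftSeq X n ⁻¹' {y | ∃ j, 1 ≤ j ∧ DescendsAt x j y} := by
  ext ω
  simp only [Set.mem_iUnion, Set.mem_inter_iff, Set.mem_preimage, Set.mem_ofPred_eq]
  constructor
  · intro hM
    obtain ⟨n, hc, hd⟩ := (sub_eq_and_Mtau_eq_iff hx).1 ⟨rfl, hM⟩
    exact ⟨n, hc, _, hd.one_le hx, hd⟩
  · rintro ⟨n, hc, j, -, hd⟩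
    exact ((sub_eq_and_Mtau_eq_iff hx).2 ⟨n, hc, hd⟩).2

end Path

end RandomWalk

open RandomWalk

theorem descent_phase_identity_general
    {Ω : Type*} [MeasurableSpace Ω] (P : Measure Ω) [IsProbabilityMeasure P]
    (X : ℕ → Ω → ℤ)
    -- `X` are i.i.d. under `P`
    (hXmeas : ∀ i, Measurable (X i))
    (hXindep : iIndepFun X P)
    (hXident : ∀ i, IdentDistrib (X i) (X 0) P P) :
    ∀ x : ℕ, 1 ≤ x → P {ω | Mtau X ω = (x : ℤ)} ≠ 0 →
      ∀ j : ℕ, 1 ≤ j →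
        pr P {ω | tauN X ω - thetaTau X ω = j ∧ Mtau X ω = (x : ℤ)}
            / pr P {ω | Mtau X ω = (x : ℤ)}
          = -- `P(τ_x = j, τ₊ > j)`
            pr P {ω | (∀ i : ℕ, 1 ≤ i → i ≤ j → Swalk X i ω ≤ 0) ∧
                (∀ i : ℕ, 1 ≤ i → i < j → -(x : ℤ) < Swalk X i ω) ∧
                Swalk X j ω ≤ -(x : ℤ)}
            -- `P(τ₊ > τ_x)`: the walk falls below `-x` before ever becoming positive
            / pr P {ω | ∃ j : ℕ, 1 ≤ j ∧ (∀ i : ℕ, 1 ≤ i → i ≤ j → Swalk X i ω ≤ 0) ∧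
                (∀ i : ℕ, 1 ≤ i → i < j → -(x : ℤ) < Swalk X i ω) ∧
                Swalk X j ω ≤ -(x : ℤ)} := by
  intro x hx hM j _
  set c := ∑' n, P {ω | ClimbsTo X x n ω}
  have hsplit : ∀ D, MeasurableSet D →
      P (⋃ n, {ω | ClimbsTo X x n ω} ∩ shiftSeq X n ⁻¹' D) = c * P ((fun ω k => X k ω) ⁻¹' D) :=
    fun D hD => shiftSeq_zero X ▸ measure_iUnion_inter_shiftSeq_preimage hXmeas hXindep hXident
      (measurableSet_climbsTo X x) (pairwise_disjoint_climbsTo X x) hD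
  have hnum := hsplit _ (measurableSet_setOfPred.2 (measurable_descendsAt x j))
  have hden := hsplit {y | ∃ j, 1 ≤ j ∧ DescendsAt x j y} (measurableSet_setOfPred.2
    (Measurable.exists fun j => measurable_const.and (measurable_descendsAt x j)))
  rw [← setOf_sub_eq_and_Mtau_eq hx] at hnum
  rw [← setOf_Mtau_eq hx] at hden
  have hc0 : c ≠ 0 := left_ne_zero_of_mul (hden ▸ hM)
  have hctop : c ≠ ⊤ := (ENNReal.lt_top_of_mul_ne_top_left (hden ▸ measure_ne_top P _)
    (right_ne_zero_of_mul (hden ▸ hM))).ne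
  simp only [pr]
  rw [hnum, hden, ← ENNReal.toReal_div, ← ENNReal.toReal_div,
    ENNReal.mul_div_mul_left _ _ hc0 hctop]
  rfl

/-- the exact identity
`P(τ - θ_τ = j | M_τ = x) = P(τ_x = j, τ₊ > j) / P(τ₊ > τ_x)`, where
`τ_x = inf {n ≥ 1 : x + S_n ≤ 0}` and `τ₊ = min {n ≥ 1 : S_n > 0}`. -/
theorem descent_phase_identity
    {Ω : Type*} [MeasurableSpace Ω] (P : Measure Ω) [IsProbabilityMeasure P]
    (X : ℕ → Ω → ℤ)
    -- `X` are i.i.d. under `P`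
    (hXmeas : ∀ i, Measurable (X i))
    (hXindep : iIndepFun X P)
    (hXident : ∀ i, IdentDistrib (X i) (X 0) P P)
    -- negative drift `E X₁ = -a < 0`
    (a : ℝ) (ha : 0 < a)
    (hXint : Integrable (fun ω => (X 0 ω : ℝ)) P)
    (hmean : ∫ ω, (X 0 ω : ℝ) ∂P = -a) :
    ∀ x : ℕ, 1 ≤ x → P {ω | Mtau X ω = (x : ℤ)} ≠ 0 →
      ∀ j : ℕ, 1 ≤ j →
        pr P {ω | tauN X ω - thetaTau X ω = j ∧ Mtau X ω = (x : ℤ)}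
            / pr P {ω | Mtau X ω = (x : ℤ)}
          = -- `P(τ_x = j, τ₊ > j)`
            pr P {ω | (∀ i : ℕ, 1 ≤ i → i ≤ j → Swalk X i ω ≤ 0) ∧
                (∀ i : ℕ, 1 ≤ i → i < j → -(x : ℤ) < Swalk X i ω) ∧
                Swalk X j ω ≤ -(x : ℤ)}
            -- `P(τ₊ > τ_x)`: the walk falls below `-x` before ever becoming positive
            / pr P {ω | ∃ j : ℕ, 1 ≤ j ∧ (∀ i : ℕ, 1 ≤ i → i ≤ j → Swalk X i ω ≤ 0) ∧
                (∀ i : ℕ, 1 ≤ i → i < j → -(x : ℤ) < Swalk X i ω) ∧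
                Swalk X j ω ≤ -(x : ℤ)} :=
  descent_phase_identity_general P X hXmeas hXindep hXident
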